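/- arXiv:2306.15467 — 4 statements merged into one kernel-verified Lean document; each statement's English description precedes it below -/
import Mathlib

section
/- Let A, B, C be real numbers with AC ≥ 0 and |B| ≥ 2(1 - |C|). Then the maximum over z in the closed unit disk of |A + Bz + Cz^2| + 1 - |z|^2 equals |A| + |B| + |C|. -/
private lemma key_abs (A B C : ℝ) (h1 : A * C ≥ 0) (h : 0 ≤ B * (A + C)) :
    |A + B + C| = |A| + |B| + |C| := by
  rcases mul_nonneg_iff.mp h1 with ⟨hA, hC⟩ | ⟨hA, hC⟩ <;>
  rcases mul_nonneg_iff.mp h with ⟨hB, hS⟩ | ⟨hB, hS⟩ <;>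
  rcases abs_cases A with ⟨eA, _⟩ | ⟨eA, _⟩ <;>
  rcases abs_cases B with ⟨eB, _⟩ | ⟨eB, _⟩ <;>
  rcases abs_cases C with ⟨eC, _⟩ | ⟨eC, _⟩ <;>
  rcases abs_cases (A + B + C) with ⟨eS, _⟩ | ⟨eS, _⟩ <;>
  linarith

/-- Choi–Kim–Sugawa lemma, case AC ≥ 0, |B| ≥ 2(1-|C|). -/
theorem stmt_5 (A B C : ℝ) (h1 : A * C ≥ 0) (h2 : |B| ≥ 2 * (1 - |C|)) :
    IsGreatest {y : ℝ | ∃ z : ℂ, ‖z‖ ≤ 1 ∧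
      y = ‖(A : ℂ) + B * z + C * z ^ 2‖ + 1 - ‖z‖ ^ 2}
      (|A| + |B| + |C|) := by
  constructor
  · -- attained at z = ±1
    by_cases h : 0 ≤ B * (A + C)
    · refine ⟨(1:ℂ), by norm_num, ?_⟩
      have hc : ((A : ℂ) + B * 1 + C * 1 ^ 2) = ((A + B + C : ℝ) : ℂ) := by push_cast; ring
      rw [hc, Complex.norm_real, Real.norm_eq_abs, key_abs A B C h1 h]
      norm_num
    · refine ⟨(-1:ℂ), by norm_num, ?_⟩
      have hc : ((A : ℂ) + B * (-1) + C * (-1) ^ 2) = ((A + (-B) + C : ℝ) : ℂ) := by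
        push_cast; ring
      rw [hc, Complex.norm_real, Real.norm_eq_abs,
        key_abs A (-B) C h1 (by push_neg at h; nlinarith)]
      rw [abs_neg]
      norm_num
  · rintro y ⟨z, hz, rfl⟩
    set r := ‖z‖ with hr
    have hr0 : 0 ≤ r := norm_nonneg z
    have htri : ‖(A : ℂ) + B * z + C * z ^ 2‖ ≤ |A| + |B| * r + |C| * r ^ 2 := by
      calc ‖(A : ℂ) + B * z + C * z ^ 2‖
          ≤ ‖(A : ℂ) + B * z‖ + ‖(C:ℂ) * z ^ 2‖ :=
            norm_add_le _ _
        _ ≤ ‖(A : ℂ)‖ + ‖(B:ℂ) * z‖ + ‖(C:ℂ) * z ^ 2‖ := by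
            gcongr; exact norm_add_le _ _
        _ = |A| + |B| * r + |C| * r ^ 2 := by
            rw [norm_mul, norm_mul, norm_pow, Complex.norm_real, Complex.norm_real,
              Complex.norm_real, Real.norm_eq_abs, Real.norm_eq_abs, Real.norm_eq_abs]
    have hC0 : 0 ≤ |C| := abs_nonneg C
    have hr2 : 0 ≤ 1 - r ^ 2 := by nlinarith
    rcases le_or_gt |C| 1 with hCle | hCgt
    · nlinarith [mul_nonneg (sub_nonneg.2 hz) (sub_nonneg.2 h2),
        mul_nonneg (mul_nonneg (sub_nonneg.2 hz) (sub_nonneg.2 hz)) (sub_nonneg.2 hCle)]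
    · nlinarith [mul_nonneg (sub_nonneg.2 hz) (abs_nonneg B),
        mul_nonneg (by linarith : (0:ℝ) ≤ |C| - 1) hr2]
end

section
/- Let A, B, C be real numbers with AC ≥ 0 and |B| < 2(1 - |C|). Then the maximum over z in the closed unit disk of |A + Bz + Cz^2| + 1 - |z|^2 equals 1 + |A| + B^2/(4(1 - |C|)). -/
/-- Choi–Kim–Sugawa lemma, case AC ≥ 0, |B| < 2(1-|C|). -/
theorem stmt_6 (A B C : ℝ) (h1 : A * C ≥ 0) (h2 : |B| < 2 * (1 - |C|)) :
    IsGreatest {y : ℝ | ∃ z : ℂ, ‖z‖ ≤ 1 ∧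
      y = ‖(A : ℂ) + B * z + C * z ^ 2‖ + 1 - ‖z‖ ^ 2}
      (1 + |A| + B ^ 2 / (4 * (1 - |C|))) := by
  have hc : 0 < 1 - |C| := by nlinarith [abs_nonneg B]
  set c := 1 - |C| with hcdef
  set t := |B| / (2 * c) with htdef
  have ht0 : 0 ≤ t := by positivity
  have ht1 : t ≤ 1 := by
    rw [htdef, div_le_one (by linarith)]; linarith
  have habs : ∀ x : ℝ, ‖(A:ℂ) + B*(x:ℂ) + C*(x:ℂ)^2‖ = |A + B*x + C*x^2| := by
    intro x
    rw [show (A:ℂ) + B*(x:ℂ) + C*(x:ℂ)^2 = ((A + B*x + C*x^2 : ℝ) : ℂ) by push_cast; ring,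
      Complex.norm_real, Real.norm_eq_abs]
  have hCc : |C| = 1 - c := by rw [hcdef]; ring
  have hfin : |A| + |B| * t + |C| * t^2 + 1 - t^2 = 1 + |A| + B^2/(4*c) := by
    rw [htdef, hCc]
    have hB2 : |B|^2 = B^2 := sq_abs B
    field_simp
    nlinarith [sq_abs B]
  constructor
  · -- membership
    have key : ∃ x : ℝ, |x| = t ∧ |A + B*x + C*x^2| = |A| + |B| * t + |C| * t^2 := by
      have hBt := mul_nonneg (abs_nonneg B) ht0
      rcases mul_nonneg_iff.mp h1 with ⟨hA, hC⟩ | ⟨hA, hC⟩ <;> rcases le_or_gt 0 B with hB | hB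
      · refine ⟨t, abs_of_nonneg ht0, ?_⟩
        have hCt := mul_nonneg hC (sq_nonneg t)
        have hpos : 0 ≤ A + B * t + C * t ^ 2 := by nlinarith [mul_nonneg hB ht0]
        rw [abs_of_nonneg hpos, abs_of_nonneg hA, abs_of_nonneg hB, abs_of_nonneg hC]
      · refine ⟨-t, by rw [abs_neg, abs_of_nonneg ht0], ?_⟩
        have hCt := mul_nonneg hC (sq_nonneg t)
        have hpos : 0 ≤ A + B * (-t) + C * (-t) ^ 2 := by
          have : |B| = -B := abs_of_neg hB
          nlinarith
        rw [abs_of_nonneg hpos, abs_of_nonneg hA, abs_of_neg hB, abs_of_nonneg hC]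
        ring
      · refine ⟨-t, by rw [abs_neg, abs_of_nonneg ht0], ?_⟩
        have hCt := mul_nonpos_of_nonpos_of_nonneg hC (sq_nonneg t)
        have hneg : A + B * (-t) + C * (-t) ^ 2 ≤ 0 := by
          have : |B| = B := abs_of_nonneg hB
          nlinarith
        rw [abs_of_nonpos hneg, abs_of_nonpos hA, abs_of_nonneg hB, abs_of_nonpos hC]
        ring
      · refine ⟨t, abs_of_nonneg ht0, ?_⟩
        have hCt := mul_nonpos_of_nonpos_of_nonneg hC (sq_nonneg t)
        have hneg : A + B * t + C * t ^ 2 ≤ 0 := by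
          have : |B| = -B := abs_of_neg hB
          nlinarith
        rw [abs_of_nonpos hneg, abs_of_nonpos hA, abs_of_neg hB, abs_of_nonpos hC]
        ring
    obtain ⟨x, hx, hax⟩ := key
    refine ⟨(x:ℂ), ?_, ?_⟩
    · rw [Complex.norm_real, Real.norm_eq_abs, hx]; exact ht1
    · rw [habs x, hax, Complex.norm_real, Real.norm_eq_abs, hx]
      exact hfin.symm
  · -- upper bound
    rintro y ⟨z, hz, rfl⟩
    set r := ‖z‖ with hr
    have hr0 : 0 ≤ r := norm_nonneg z
    have htri : ‖(A:ℂ) + B*z + C*z^2‖ ≤ |A| + |B| * r + |C| * r^2 := by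
      calc ‖(A:ℂ) + B*z + C*z^2‖
          ≤ ‖(A:ℂ) + B*z‖ + ‖(C:ℂ)*z^2‖ := norm_add_le _ _
        _ ≤ ‖(A:ℂ)‖ + ‖(B:ℂ)*z‖ + ‖(C:ℂ)*z^2‖ := by
            exact add_le_add_left (norm_add_le (A:ℂ) ((B:ℂ)*z)) _
        _ = |A| + |B| * r + |C| * r^2 := by
            rw [norm_mul, norm_mul, norm_pow, Complex.norm_real, Complex.norm_real,
              Complex.norm_real, Real.norm_eq_abs, Real.norm_eq_abs, Real.norm_eq_abs]
    have hq : |B| * r - c* r^2 ≤ B^2/(4*c) := by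
      rw [le_div_iff₀ (by linarith)]
      nlinarith [sq_nonneg (2*c* r - |B|), sq_abs B]
    have hCr : |C| * r^2 = (1-c) * r^2 := by rw [hCc]
    linarith [htri, hq, hCr]
end

section
/- Let A, B, C be real numbers with AC < 0 and |AB| ≤ |C|(|B| - 4|A|). Then the maximum over z in the closed unit disk of |A + Bz + Cz^2| + 1 - |z|^2 equals -|A| + |B| + |C|, provided also that it is not the case that (-4AC(C^{-2}-1) ≤ B^2 and |B| < 2(1-|C|)) and not the case that B^2 < min{4(1+|C|)^2, -4AC(C^{-2}-1)}. -/
set_option maxHeartbeats 1000000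


lemma cks_E1 (a b c : ℝ) (ha : 0 < a) (hac : a < c) (hb : 0 < b)
    (H1 : 4*(a*c) ≤ b*(c-a)) (H2 : 2*(1-c) ≤ b)
    (Hc : 4*a*(1-c^2) ≤ c*b^2) (hb2 : b ≤ 2*(1+c)) :
    b^2 ≤ 4*(1+c)*(b+c-1-2*a) := by
  nlinarith [sq_nonneg (b - 2*(1-c)), sq_nonneg (b-2*(1+c)), mul_pos ha (lt_trans ha hac),
    sq_nonneg (c-a), mul_pos hb (sub_pos.2 hac), sq_nonneg (b*(c-a)-4*a*c)]

lemma cks_aux2 (a b c s : ℝ) (ha : 0 < a) (hac : a < c) (hb : 0 < b)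
    (hs0 : 0 ≤ s) (hs1 : s ≤ 1)
    (H1 : 4*(a*c) ≤ b*(c-a)) (H2 : 2*(1-c) ≤ b)
    (H3 : b < 2*(1+c) → 4*a*(1-c^2) ≤ c*b^2) :
    |a - c*s^2| + b*s ≤ b + c - a - 1 + s^2 := by
  have hc : 0 < c := lt_trans ha hac
  rcases le_total (a - c*s^2) 0 with hm | hm
  · rw [abs_of_nonpos hm]
    rcases le_total c 1 with hc1 | hc1
    · nlinarith [mul_nonneg (sub_nonneg.2 hs1) (sub_nonneg.2 H2),
        mul_nonneg (sub_nonneg.2 hc1) (sq_nonneg (1-s))]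
    · nlinarith [mul_nonneg (sub_nonneg.2 hs1) hb.le,
        mul_nonneg (sub_nonneg.2 hc1) (mul_nonneg (sub_nonneg.2 hs1) (by linarith : (0:ℝ) ≤ 1 + s))]
  · rw [abs_of_nonneg hm]
    rcases le_or_gt (2*(1+c)) b with hb2 | hb2
    · nlinarith [mul_nonneg (sub_nonneg.2 hs1) (by linarith : (0:ℝ) ≤ b - 2*(1+c)), sq_nonneg (1-s),
        mul_nonneg hc.le (sq_nonneg (1-s))]
    · have hE := cks_E1 a b c ha hac hb H1 H2 (H3 hb2) hb2.le
      nlinarith [sq_nonneg (2*(1+c)*s - b), hc]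


lemma cks_K0 (a b c : ℝ) (ha : 0 < a) (hac : a < c)
    (H1 : 4*(a*c) ≤ b*(c-a)) (H2 : 2*(1-c) ≤ b) :
    a ≤ c*(b+c-a-1) := by
  rcases le_total (1-c) (2*a) with h | h
  · nlinarith [mul_pos ha (sub_pos.2 hac)]
  · nlinarith [mul_pos ha (sub_pos.2 hac)]

lemma cks_K2 (a b c : ℝ) (ha : 0 < a) (hac : a < c) (hb : 0 < b)
    (H1 : 4*(a*c) ≤ b*(c-a)) (H2 : 2*(1-c) ≤ b)
    (Hc : 4*a*(1-c^2) ≤ c*b^2)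
    (K0 : a ≤ c*(b+c-a-1)) :
    0 ≤ b^2*(c*(b+c-a-1)-a)*(c*(b+c-a-1)+a)
      + a*(2*c+b)*(2*b^2*c^2 - (1-c^2)*(b*(c-a)+4*(a*c))) := by
  nlinarith [mul_nonneg (sub_nonneg.2 Hc) (sub_nonneg.2 H2), sq_nonneg (b-2*(1-c)),
    mul_nonneg (sub_nonneg.2 Hc) ha.le, mul_nonneg (sub_nonneg.2 Hc) (sub_pos.2 hac).le,
    mul_nonneg (sub_nonneg.2 H2) ha.le, mul_nonneg (sub_nonneg.2 H2) (sub_pos.2 hac).le,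
    mul_nonneg (sub_nonneg.2 K0) hb.le, mul_pos ha hb, mul_pos ha (lt_trans ha hac),
    mul_nonneg (sub_nonneg.2 H1) ha.le, mul_nonneg (sub_nonneg.2 H1) hb.le,
    mul_nonneg (mul_nonneg (sub_nonneg.2 Hc) ha.le) hb.le,
    mul_nonneg (mul_nonneg (sub_nonneg.2 H2) ha.le) hb.le,
    mul_nonneg (mul_nonneg (sub_nonneg.2 H2) ha.le) (lt_trans ha hac).le]

lemma cks_interp (L0 L1 P A q : ℝ) (hq0 : 0 ≤ q) (hq1 : q ≤ 1) (hL0 : 0 ≤ L0)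
    (hP : 0 < P) (hqb : q*P ≤ A) (hK : 0 ≤ P*L0 + A*(L1-L0)) :
    0 ≤ (1-q)*L0 + q*L1 := by
  rcases le_or_gt 0 L1 with h | h
  · exact add_nonneg (mul_nonneg (by linarith) hL0) (mul_nonneg hq0 h)
  · have hz : L1 - L0 ≤ 0 := by linarith
    have h1 := mul_le_mul_of_nonpos_right hqb hz
    by_contra hcon
    push_neg at hcon
    have h2 : P*((1-q)*L0 + q*L1) < 0 := mul_neg_of_pos_of_neg hP hcon
    nlinarith [h1, hK, h2]

lemma cks_aux1 (a b c q : ℝ) (ha : 0 < a) (hac : a < c) (hb : 0 < b)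
    (hq0 : 0 ≤ q) (hq1 : q ≤ 1)
    (H1 : 4*(a*c) ≤ b*(c-a)) (H2 : 2*(1-c) ≤ b)
    (Hc : 4*a*(1-c^2) ≤ c*b^2)
    (Hpsi : b^2*(a-c*q)^2 ≤ 16*a^2*c^2*q) :
    (a+c*q)^2*(4*(a*c)+b^2) ≤ 4*(a*c)*(b+c-a-1+q)^2 := by
  have hc : 0 < c := lt_trans ha hac
  have K0 := cks_K0 a b c ha hac H1 H2
  have K2 := cks_K2 a b c ha hac hb H1 H2 Hc K0
  have hb2a : 2*a < b := by nlinarith [mul_pos ha hc]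
  have hP : 0 < c*(b-2*a) := mul_pos hc (by linarith)
  have hqbar : q*(c*(b-2*a)) ≤ a*(2*c+b) := by
    by_contra hcon
    push_neg at hcon
    have h2 : 2*(a*c)*(1+q) < b*(c*q-a) := by nlinarith
    have h3 : (2*(a*c)*(1+q))^2 < (b*(c*q-a))^2 := by
      have h0 : 0 ≤ 2*(a*c)*(1+q) := by positivity
      nlinarith [h2, h0]
    nlinarith [h3, Hpsi, sq_nonneg (2*(a*c)*(1-q))]
  have hL0 : 0 ≤ 4*a*b^2*(c*(b+c-a-1)-a)*(c*(b+c-a-1)+a) := by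
    apply mul_nonneg (mul_nonneg (by positivity) (by linarith))
    nlinarith
  have hK : 0 ≤ (c*(b-2*a))*(4*a*b^2*(c*(b+c-a-1)-a)*(c*(b+c-a-1)+a))
      + (a*(2*c+b))*(((b*(c-a)-4*(a*c))*(4*a*(2*b^2*c^2-(1-c^2)*(b*(c-a)+4*(a*c)))))
        - 4*a*b^2*(c*(b+c-a-1)-a)*(c*(b+c-a-1)+a)) := by
    have hid2 : (c*(b-2*a))*(4*a*b^2*(c*(b+c-a-1)-a)*(c*(b+c-a-1)+a))
      + (a*(2*c+b))*(((b*(c-a)-4*(a*c))*(4*a*(2*b^2*c^2-(1-c^2)*(b*(c-a)+4*(a*c)))))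
        - 4*a*b^2*(c*(b+c-a-1)-a)*(c*(b+c-a-1)+a))
        = ((b*(c-a)-4*(a*c))*(4*a))*(b^2*(c*(b+c-a-1)-a)*(c*(b+c-a-1)+a)
            + a*(2*c+b)*(2*b^2*c^2 - (1-c^2)*(b*(c-a)+4*(a*c)))) := by ring
    rw [hid2]
    exact mul_nonneg (mul_nonneg (by linarith) (by linarith)) K2
  have hLq := cks_interp (4*a*b^2*(c*(b+c-a-1)-a)*(c*(b+c-a-1)+a))
    ((b*(c-a)-4*(a*c))*(4*a*(2*b^2*c^2-(1-c^2)*(b*(c-a)+4*(a*c)))))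
    (c*(b-2*a)) (a*(2*c+b)) q hq0 hq1 hL0 hP hqbar hK
  have hid : b^2*c*(4*(a*c)*(b+c-a-1+q)^2 - (a+c*q)^2*(4*(a*c)+b^2))
      = (1-q)*(4*a*b^2*(c*(b+c-a-1)-a)*(c*(b+c-a-1)+a))
        + q*((b*(c-a)-4*(a*c))*(4*a*(2*b^2*c^2-(1-c^2)*(b*(c-a)+4*(a*c)))))
        + (c*b^2-4*a*(1-c^2))*(16*a^2*c^2*q - b^2*(a-c*q)^2) := by ring
  have hfin : 0 ≤ b^2*c*(4*(a*c)*(b+c-a-1+q)^2 - (a+c*q)^2*(4*(a*c)+b^2)) := by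
    rw [hid]
    exact add_nonneg hLq (mul_nonneg (by linarith) (by linarith))
  have hbc : 0 < b^2*c := by positivity
  by_contra hcon
  push_neg at hcon
  exact absurd hfin (not_le.2 (mul_neg_of_pos_of_neg hbc (by linarith)))


lemma cks_key (a b c u x v : ℝ) (ha : 0 < a) (hac : a < c) (hb : 0 < b)
    (hu1 : u ≤ 1) (hx : x^2 ≤ u)
    (H1 : 4*(a*c) ≤ b*(c-a)) (H2 : 2*(1-c) ≤ b)
    (Hc : 4*a*(1-c^2) ≤ c*b^2)
    (hv : v^2 = b^2*(a-c*u)^2) :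
    a^2 + b^2*u + c^2*u^2 + 2*(a*c)*u + 2*v*x - 4*(a*c)*x^2 ≤ (b+c-a-1+u)^2 := by
  have hu0 : 0 ≤ u := le_trans (sq_nonneg x) hx
  have hc : 0 < c := lt_trans ha hac
  have hacp : 0 < a*c := mul_pos ha hc
  by_cases hcase : v^2 ≤ 16*a^2*c^2*u
  · have Hpsi : b^2*(a-c*u)^2 ≤ 16*a^2*c^2*u := hv ▸ hcase
    have haux := cks_aux1 a b c u ha hac hb hu0 hu1 H1 H2 Hc Hpsi
    have hident : 4*(a*c)*(a^2 + b^2*u + c^2*u^2 + 2*(a*c)*u + 2*v*x - 4*(a*c)*x^2)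
        = (a+c*u)^2*(4*(a*c)+b^2) + (v^2 - b^2*(a-c*u)^2) - (v-4*(a*c)*x)^2 := by ring
    have h4 : 4*(a*c)*(a^2 + b^2*u + c^2*u^2 + 2*(a*c)*u + 2*v*x - 4*(a*c)*x^2)
        ≤ 4*(a*c)*((b+c-a-1+u)^2) := by
      rw [hident]
      have := sq_nonneg (v-4*(a*c)*x)
      linarith [hv]
    exact le_of_mul_le_mul_left h4 (by positivity)
  · push_neg at hcase
    set s := Real.sqrt u with hsdef
    have hs0 : 0 ≤ s := Real.sqrt_nonneg u
    have hs2 : s^2 = u := Real.sq_sqrt hu0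
    have hs1 : s ≤ 1 := Real.sqrt_le_one.mpr hu1
    have hxle : x ≤ s := by nlinarith [hs2, hx]
    have hxge : -s ≤ x := by nlinarith [hs2, hx]
    have haux2 := cks_aux2 a b c s ha hac hb hs0 hs1 H1 H2 (fun _ => Hc)
    rw [hs2] at haux2
    set e := |a - c*u| with hedef
    have he0 : 0 ≤ e := abs_nonneg _
    have he2 : e^2 = (a-c*u)^2 := sq_abs _
    have hD0 : 0 ≤ b+c-a-1+u := le_trans (by positivity : (0:ℝ) ≤ e + b*s) haux2
    have hQ : a^2 + b^2*u + c^2*u^2 + 2*(a*c)*u + 2*v*x - 4*(a*c)*x^2 ≤ (e + b*s)^2 := by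
      rcases le_or_gt 0 v with hv0 | hv0
      · have hbe : b*e = v := by
          have h1 : (b*e)^2 = v^2 := by rw [mul_pow, he2, hv]
          nlinarith [mul_nonneg hb.le he0, hv0, sq_nonneg (b*e - v)]
        have hvs : 4*(a*c)*s < v := by
          by_contra hcon
          push_neg at hcon
          have h5 : v^2 ≤ (4*(a*c)*s)^2 := pow_le_pow_left₀ hv0 hcon 2
          have hs2' : (4*(a*c)*s)^2 = 16*a^2*c^2*u := by
            rw [← hs2]; ring
          linarith [hcase, h5, hs2']
        have hfac : 0 ≤ 2*v - 4*(a*c)*(x+s) := by nlinarith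
        nlinarith [mul_nonneg (sub_nonneg.2 hxle) hfac, hs2, hbe, he2]
      · have hbe : b*e = -v := by
          have h1 : (b*e)^2 = (-v)^2 := by rw [mul_pow, he2]; rw [neg_pow]; simp [hv]
          nlinarith [mul_nonneg hb.le he0, hv0.le, sq_nonneg (b*e + v)]
        have hvs : 4*(a*c)*s < -v := by
          by_contra hcon
          push_neg at hcon
          have h5 : (-v)^2 ≤ (4*(a*c)*s)^2 := pow_le_pow_left₀ (by linarith) hcon 2
          have hs2' : (4*(a*c)*s)^2 = 16*a^2*c^2*u := by
            rw [← hs2]; ring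
          nlinarith [hcase, h5, hs2']
        have hfac : 2*v + 4*(a*c)*(s-x) ≤ 0 := by nlinarith
        nlinarith [mul_nonneg (by linarith : (0:ℝ) ≤ x+s) (neg_nonneg.2 hfac), hs2, hbe, he2]
    nlinarith [hQ, haux2, he0, mul_nonneg hb.le hs0, hD0]


lemma cks_eq_of_sq_eq {x y : ℝ} (hx : 0 ≤ x) (hy : 0 ≤ y) (h : x^2 = y^2) : x = y := by
  rcases mul_eq_zero.mp (show (x-y)*(x+y) = 0 by linear_combination h) with h' | h'
  · linarith
  · linarith

/-- Choi–Kim–Sugawa lemma, case AC < 0, |AB| ≤ |C|(|B| - 4|A|). -/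
theorem stmt_7 (A B C : ℝ) (hAC : A * C < 0)
    (hmain : |A * B| ≤ |C| * (|B| - 4 * |A|))
    (hnot1 : ¬(-4 * A * C * (1 / C ^ 2 - 1) ≤ B ^ 2 ∧ |B| < 2 * (1 - |C|)))
    (hnot2 : ¬(B ^ 2 < min (4 * (1 + |C|) ^ 2) (-4 * A * C * (1 / C ^ 2 - 1)))) :
    IsGreatest {y : ℝ | ∃ z : ℂ, ‖z‖ ≤ 1 ∧
      y = ‖(A : ℂ) + B * z + C * z ^ 2‖ + 1 - ‖z‖ ^ 2}
      (-|A| + |B| + |C|) := by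
  have hA0 : A ≠ 0 := by rintro rfl; simp at hAC
  have hC0 : C ≠ 0 := by rintro rfl; simp at hAC
  have ha : 0 < |A| := abs_pos.2 hA0
  have hc : 0 < |C| := abs_pos.2 hC0
  have hACm : |A| *|C| = -(A*C) := by rw [← abs_mul]; exact abs_of_neg hAC
  have hmain' : |A| *|B| ≤ |C| *(|B| - 4*|A|) := by rwa [abs_mul] at hmain
  have H1 : 4*(|A| *|C|) ≤ |B| *(|C|-|A|) := by nlinarith [hmain']
  have hb : 0 < |B| := by
    rcases (abs_nonneg B).lt_or_eq with h | h
    · exact h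
    · exfalso; nlinarith [hmain', mul_pos ha hc]
  have hac : |A| < |C| := by nlinarith [mul_pos ha hc]
  have H2 : 2*(1-|C|) ≤ |B| := by
    by_contra hH2
    push_neg at hH2
    have hc1 : |C| < 1 := by nlinarith [abs_nonneg B]
    have hB2 : B^2 < -4*A*C*(1/C^2-1) := by
      by_contra hB
      push_neg at hB
      exact hnot1 ⟨hB, hH2⟩
    have hmin : min (4*(1+|C|)^2) (-4*A*C*(1/C^2-1)) ≤ B^2 := not_lt.mp hnot2
    have h4 : 4*(1+|C|)^2 ≤ B^2 := by
      rcases le_total (4*(1+|C|)^2) (-4*A*C*(1/C^2-1)) with h | h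
      · rwa [min_eq_left h] at hmin
      · rw [min_eq_right h] at hmin; linarith
    have : 2*(1+|C|) ≤ |B| := by nlinarith [sq_abs B, abs_nonneg B]
    linarith
  have Hc : 4*|A| *(1-|C|^2) ≤ |C| *|B|^2 := by
    rcases le_or_gt (2*(1+|C|)) |B| with hB | hB
    · have hB2 : 4*(1+|C|)^2 ≤ |B| ^2 := by nlinarith [sq_nonneg (|B| - 2*(1+|C|)), abs_nonneg B]
      nlinarith [hB2, mul_pos ha hc, sq_nonneg (1-|C|), mul_pos hc hc, mul_pos hc hb]
    · have h1 : B^2 < 4*(1+|C|)^2 := by nlinarith [sq_abs B, abs_nonneg B]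
      have hmin : min (4*(1+|C|)^2) (-4*A*C*(1/C^2-1)) ≤ B^2 := not_lt.mp hnot2
      have h2 : -4*A*C*(1/C^2-1) ≤ B^2 := by
        rcases le_total (-4*A*C*(1/C^2-1)) (4*(1+|C|)^2) with h | h
        · rwa [min_eq_right h] at hmin
        · rw [min_eq_left h] at hmin; linarith
      have hC2 : (0:ℝ) < C^2 := by positivity
      have h2' := mul_le_mul_of_nonneg_right h2 hC2.le
      have heq : (-4*A*C*(1/C^2-1))*C^2 = -4*A*C*(1-C^2) := by
        field_simp
      rw [heq] at h2'
      have h6 : 4*(|A| * |C|)*(1-|C|^2) ≤ |B|^2*|C|^2 := by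
        have e1 : 4*(|A| * |C|)*(1-|C|^2) = -4*A*C*(1-C^2) := by
          rw [sq_abs, hACm]; ring
        have e2 : |B|^2*|C|^2 = B^2*C^2 := by rw [sq_abs, sq_abs]
        rw [e1, e2]; exact h2'
      by_contra hcon
      push_neg at hcon
      nlinarith [h6, mul_lt_mul_of_pos_left hcon hc]
  have hK0 := cks_K0 |A| |B| |C| ha hac H1 H2
  have hTpos : 0 ≤ |B|+|C|-|A|-1 := by
    by_contra hcon
    push_neg at hcon
    nlinarith [hK0, mul_neg_of_pos_of_neg hc hcon]
  constructor
  · -- membership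
    set ε : ℝ := if 0 ≤ B*(A+C) then 1 else -1 with hεdef
    have hε2 : ε^2 = 1 := by rw [hεdef]; split_ifs <;> norm_num
    have hεabs : |ε| = 1 := by rw [hεdef]; split_ifs <;> norm_num
    have hAC2 : (A+C)^2 = (|C|-|A|)^2 := by
      nlinarith [sq_abs A, sq_abs C, hACm]
    have habsAC : |A+C| = |C|-|A| := by
      apply cks_eq_of_sq_eq (abs_nonneg _) (by linarith)
      rw [sq_abs]; exact hAC2
    have hBe : B*ε*(A+C) = |B| *(|C|-|A|) := by
      rw [hεdef]
      split_ifs with h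
      · calc B*1*(A+C) = B*(A+C) := by ring
          _ = |B*(A+C)| := (abs_of_nonneg h).symm
          _ = |B| * |A+C| := abs_mul _ _
          _ = |B| * (|C|-|A|) := by rw [habsAC]
      · push_neg at h
        calc B*(-1)*(A+C) = -(B*(A+C)) := by ring
          _ = |B*(A+C)| := (abs_of_neg h).symm
          _ = |B| * |A+C| := abs_mul _ _
          _ = |B| * (|C|-|A|) := by rw [habsAC]
    refine ⟨((ε:ℝ):ℂ), ?_, ?_⟩
    · rw [Complex.norm_real, Real.norm_eq_abs, hεabs]
    · have hz2 : ((ε:ℝ):ℂ)^2 = ((ε^2:ℝ):ℂ) := by push_cast; ring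
      have hcast : (A:ℂ) + B*((ε:ℝ):ℂ) + C*((ε:ℝ):ℂ)^2 = ((A + B*ε + C*ε^2 : ℝ):ℂ) := by
        push_cast; ring
      rw [hcast, Complex.norm_real, Real.norm_eq_abs, Complex.norm_real, Real.norm_eq_abs, hεabs]
      have hsq : (A + B*ε + C*ε^2)^2 = (-|A|+|B|+|C|)^2 := by
        have expand : (A + B*ε + C*ε^2)^2
            = (A+C)^2 + 2*(B*ε*(A+C)) + B^2*(ε^2) + ((ε^2-1)*(2*A*C + C^2*(ε^2+1) + 2*B*C*ε)) := by
          ring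
        rw [expand, hε2, hAC2, hBe]
        nlinarith [sq_abs B]
      have habs : |A + B*ε + C*ε^2| = -|A|+|B|+|C| := by
        apply cks_eq_of_sq_eq (abs_nonneg _) (by linarith)
        rw [sq_abs]; exact hsq
      rw [habs]; norm_num
  · -- upper bound
    rintro y ⟨z, hz, rfl⟩
    set x := z.re
    set w := z.im
    have habs2 : (‖z‖)^2 = x^2 + w^2 := by
      rw [Complex.sq_norm, Complex.normSq_apply]; ring
    have hu0 : 0 ≤ x^2 + w^2 := by positivity
    have hu1 : x^2 + w^2 ≤ 1 := by nlinarith [hz, norm_nonneg z]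
    have hx2 : x^2 ≤ x^2 + w^2 := by nlinarith [sq_nonneg w]
    have hN : (‖(A:ℂ) + B*z + C*z^2‖)^2
        = (A + B*x + C*(x^2 - w^2))^2 + (B*w + C*(2*x*w))^2 := by
      rw [Complex.sq_norm, Complex.normSq_apply]
      simp [Complex.add_re, Complex.add_im, Complex.mul_re, Complex.mul_im, pow_two,
        Complex.ofReal_re, Complex.ofReal_im]
      ring
    have hQform : (A + B*x + C*(x^2 - w^2))^2 + (B*w + C*(2*x*w))^2
        = |A|^2 + |B|^2*(x^2+w^2) + |C|^2*(x^2+w^2)^2 + 2*(|A| *|C|)*(x^2+w^2)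
          + 2*(B*(A+C*(x^2+w^2)))*x - 4*(|A| *|C|)*x^2 := by
      linear_combination (-1:ℝ)*sq_abs A + (-(x^2+w^2))*sq_abs B + (-(x^2+w^2)^2)*sq_abs C
        + (-2*(x^2+w^2)+4*x^2)*hACm
    have hv : (B*(A+C*(x^2+w^2)))^2 = |B|^2*(|A|-|C| *(x^2+w^2))^2 := by
      linear_combination (-B^2)*sq_abs A + (-(|A| -|C| *(x^2+w^2))^2)*sq_abs B
        + (-B^2*(x^2+w^2)^2)*sq_abs C + (2*B^2*(x^2+w^2))*hACm
    have hkey := cks_key |A| |B| |C| (x^2+w^2) x (B*(A+C*(x^2+w^2))) ha hac hb hu1 hx2 H1 H2 Hc hv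
    have hNle : (‖(A:ℂ) + B*z + C*z^2‖)^2 ≤ (|B|+|C|-|A|-1+(x^2+w^2))^2 := by
      rw [hN, hQform]; exact hkey
    clear hN hQform hkey hv
    have hD0 : 0 ≤ |B|+|C|-|A|-1+(x^2+w^2) := by linarith
    have hNle' : ‖(A:ℂ) + B*z + C*z^2‖ ≤ |B|+|C|-|A|-1+(x^2+w^2) := by
      nlinarith [norm_nonneg ((A:ℂ) + B*z + C*z^2), hNle, hD0]
    rw [habs2]
    linarith [hNle']
end

section
/- The function k(x) = (1/144)(x^4 - 2x^2 + 4)√((7 - x^2)/(4 + 2x^2)) is strictly decreasing on the interval ((1/3)√(√61 - 5), 1); consequently k(x) < k((1/3)√(√61 - 5)) < 1/33 for all x in that interval. -/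
private lemma qpos (s t : ℝ) (hs0 : 0 ≤ s) (hs1 : s ≤ 1) (ht0 : 0 ≤ t) (ht1 : t ≤ 1) :
    0 < 4*t^4 + 2*s*t^4 - 44*t^3 - 18*s*t^3 + 2*s^2*t^3 + 160*t^2 + 36*s*t^2
      - 18*s^2*t^2 + 2*s^3*t^2 - 400*t - 40*s*t + 36*s^2*t - 18*s^3*t + 2*s^4*t
      + 736 - 400*s + 160*s^2 - 44*s^3 + 4*s^4 := by
  nlinarith [mul_nonneg (mul_nonneg hs0 ht0) (sub_nonneg.2 hs1),
    mul_nonneg (mul_nonneg hs0 ht0) (sub_nonneg.2 ht1), sq_nonneg (s-t),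
    sq_nonneg (s+t-1), mul_nonneg hs0 ht0,
    mul_nonneg (sub_nonneg.2 hs1) (sub_nonneg.2 ht1), sq_nonneg (s*t),
    mul_nonneg (mul_nonneg hs0 hs0) ht0, mul_nonneg (mul_nonneg ht0 ht0) hs0]

private lemma key (k : ℝ → ℝ)
    (hk : ∀ x, k x = (x ^ 4 - 2 * x ^ 2 + 4) *
      Real.sqrt ((7 - x ^ 2) / (4 + 2 * x ^ 2)) / 144)
    (a b : ℝ) (ha0 : 0 ≤ a) (hab : a < b) (hb1 : b ≤ 1) : k b < k a := by
  have ha1 : a ≤ 1 := le_of_lt (lt_of_lt_of_le hab hb1)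
  have hb0 : 0 ≤ b := le_trans ha0 (le_of_lt hab)
  have hs1 : a ^ 2 ≤ 1 := by nlinarith
  have ht1 : b ^ 2 ≤ 1 := by nlinarith
  have hst : a ^ 2 < b ^ 2 := by nlinarith
  have hA : 0 < a ^ 4 - 2 * a ^ 2 + 4 := by nlinarith [sq_nonneg (a^2 - 1)]
  have hB : 0 < b ^ 4 - 2 * b ^ 2 + 4 := by nlinarith [sq_nonneg (b^2 - 1)]
  have hda : (0:ℝ) < 4 + 2 * a ^ 2 := by positivity
  have hdb : (0:ℝ) < 4 + 2 * b ^ 2 := by positivity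
  have hua : 0 ≤ (7 - a ^ 2) / (4 + 2 * a ^ 2) := by
    apply div_nonneg _ (le_of_lt hda); nlinarith
  have hub : 0 ≤ (7 - b ^ 2) / (4 + 2 * b ^ 2) := by
    apply div_nonneg _ (le_of_lt hdb); nlinarith
  have hsa2 : (Real.sqrt ((7 - a ^ 2) / (4 + 2 * a ^ 2))) ^ 2
      = (7 - a ^ 2) / (4 + 2 * a ^ 2) := Real.sq_sqrt hua
  have hsb2 : (Real.sqrt ((7 - b ^ 2) / (4 + 2 * b ^ 2))) ^ 2
      = (7 - b ^ 2) / (4 + 2 * b ^ 2) := Real.sq_sqrt hub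
  set sa := Real.sqrt ((7 - a ^ 2) / (4 + 2 * a ^ 2)) with hsa
  set sb := Real.sqrt ((7 - b ^ 2) / (4 + 2 * b ^ 2)) with hsb
  have hsa0 : 0 ≤ sa := Real.sqrt_nonneg _
  have hsb0 : 0 ≤ sb := Real.sqrt_nonneg _
  rw [hk a, hk b]
  have hpoly : (b ^ 4 - 2 * b ^ 2 + 4) ^ 2 * (7 - b ^ 2) * (4 + 2 * a ^ 2)
      < (a ^ 4 - 2 * a ^ 2 + 4) ^ 2 * (7 - a ^ 2) * (4 + 2 * b ^ 2) := by
    have hq := qpos (a ^ 2) (b ^ 2) (by positivity) hs1 (by positivity) ht1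
    nlinarith [mul_pos (sub_pos.2 hst) hq]
  have hsq : ((b ^ 4 - 2 * b ^ 2 + 4) * sb) ^ 2
      < ((a ^ 4 - 2 * a ^ 2 + 4) * sa) ^ 2 := by
    rw [mul_pow, mul_pow, hsa2, hsb2, ← mul_div_assoc, ← mul_div_assoc,
      div_lt_div_iff₀ hdb hda]
    linarith [hpoly]
  have hmul : (b ^ 4 - 2 * b ^ 2 + 4) * sb < (a ^ 4 - 2 * a ^ 2 + 4) * sa :=
    lt_of_pow_lt_pow_left₀ 2 (mul_nonneg (le_of_lt hA) hsa0) hsq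
  linarith

theorem stmt_12 (k : ℝ → ℝ) (p' : ℝ)
    (hk : ∀ x, k x = (x ^ 4 - 2 * x ^ 2 + 4) *
      Real.sqrt ((7 - x ^ 2) / (4 + 2 * x ^ 2)) / 144)
    (hp' : p' = (1 / 3) * Real.sqrt (Real.sqrt 61 - 5)) :
    StrictAntiOn k (Set.Ioo p' 1) ∧
    (∀ x ∈ Set.Ioo p' 1, k x < k p') ∧ k p' < 1 / 33 := by
  have hr0 : (0:ℝ) ≤ 61 := by norm_num
  set r := Real.sqrt 61 with hr
  have hr2 : r ^ 2 = 61 := Real.sq_sqrt hr0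
  have hrn : 0 ≤ r := Real.sqrt_nonneg 61
  have hrlb : (7.62:ℝ) < r := by nlinarith
  have hrub : r < 7.82 := by nlinarith
  have hr5 : (0:ℝ) ≤ r - 5 := by linarith
  have hp0 : 0 ≤ p' := by rw [hp']; positivity
  have hp2 : p' ^ 2 = (r - 5) / 9 := by
    rw [hp', mul_pow, Real.sq_sqrt hr5]; ring
  have hp1 : p' < 1 := by nlinarith
  refine ⟨?_, ?_, ?_⟩
  · intro x hx y hy hxy
    exact key k hk x y (le_trans hp0 (le_of_lt hx.1)) hxy (le_of_lt hy.2)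
  · intro x hx
    exact key k hk p' x hp0 hx.1 (le_of_lt hx.2)
  · rw [hk p']
    have hA : p' ^ 4 - 2 * p' ^ 2 + 4 = (500 - 28 * r) / 81 := by
      have : p' ^ 4 = ((r - 5) / 9) ^ 2 := by rw [← hp2]; ring
      rw [this, hp2]; field_simp; nlinarith
    have hApos : (0:ℝ) < (500 - 28 * r) / 81 := by nlinarith
    have hu : (7 - p' ^ 2) / (4 + 2 * p' ^ 2) = (68 - r) / (26 + 2 * r) := by
      rw [hp2]; rw [div_eq_div_iff (by nlinarith) (by nlinarith)]; ring
    have husmall : (7 - p' ^ 2) / (4 + 2 * p' ^ 2) < 1.21 ^ 2 := by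
      rw [hu, div_lt_iff₀ (by nlinarith)]; nlinarith
    have hsqrt : Real.sqrt ((7 - p' ^ 2) / (4 + 2 * p' ^ 2)) < 1.21 := by
      rw [show (1.21:ℝ) = Real.sqrt (1.21 ^ 2) by
        rw [Real.sqrt_sq (by norm_num)]]
      exact Real.sqrt_lt_sqrt (by rw [hu]; exact div_nonneg (by nlinarith) (by nlinarith)) husmall
    have hsn : 0 ≤ Real.sqrt ((7 - p' ^ 2) / (4 + 2 * p' ^ 2)) := Real.sqrt_nonneg _
    rw [hA]
    rw [div_lt_iff₀ (by norm_num : (0:ℝ) < 144)] at *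
    calc (500 - 28 * r) / 81 * Real.sqrt ((7 - p' ^ 2) / (4 + 2 * p' ^ 2))
        < (500 - 28 * r) / 81 * 1.21 := by
          exact mul_lt_mul_of_pos_left hsqrt hApos
      _ < 1 / 33 * 144 := by nlinarith
end
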